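/- arXiv:1504.01557 — 2 statements merged into one kernel-verified Lean document; each statement's English description precedes it below -/
import Mathlib

section
/- There exists a two-player quantitative game played on a finite graph with an initial vertex that admits a weak subgame perfect equilibrium but no subgame perfect equilibrium. Concretely, in the game with vertices v_0 (player 1), v_1 (player 2), v_2, v_3, edges v_0→v_1, v_0→v_2, v_1→v_0, v_1→v_3, v_2→v_2, v_3→v_3, and costs determined by the ending cycle — plays ending in v_2^ω cost (1,2), plays ending in v_3^ω cost (0,1), and the play (v_0v_1)^ω costs (2,0) — the game from v_0 has a weak SPE but no SPE. -/
open Classical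

noncomputable section

/-- A multiplayer turn-based quantitative game on a directed graph:
`owner` assigns each vertex to a player, `E` is the edge relation (every
vertex has a successor), and `cost i` is player `i`'s cost function on
infinite sequences of vertices (to be minimized), valued in `ℝ ∪ {±∞}`. -/
structure QGame (P V : Type) where
  owner : V → P
  E : V → V → Prop
  succ_exists : ∀ v, ∃ v', E v v'
  cost : P → (ℕ → V) → EReal

namespace QGame

variable {P V : Type}

/-- An infinite play of the game: consecutive vertices are joined by edges. -/
def IsPlay (G : QGame P V) (ρ : ℕ → V) : Prop := ∀ n, G.E (ρ n) (ρ (n + 1))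

/-- Concatenation `hρ` of a finite history `h` with an infinite play `ρ`. -/
def prepend (h : List V) (ρ : ℕ → V) : ℕ → V := fun n =>
  if hn : n < h.length then h.get ⟨n, hn⟩ else ρ (n - h.length)

/-- The prefix of length `n` of a play, as a list. -/
def playPrefix (ρ : ℕ → V) (n : ℕ) : List V := List.ofFn fun k : Fin n => ρ k

/-- `hv` is a history of the game initialized at `v0`: here `h` is the strict
past and `v` the current vertex; the sequence `h ++ [v]` starts at `v0` and
follows edges. -/
def IsHist (G : QGame P V) (v0 : V) (h : List V) (v : V) : Prop :=
  (h ++ [v]).head? = some v0 ∧ List.Chain' G.E (h ++ [v])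

/-- A (turn-based) strategy profile: given the past history and the current
vertex, choose the next vertex.  An individual strategy of player `i` is of
the same type; only its values at vertices owned by `i` matter. -/
abbrev Strat (P V : Type) := List V → V → V

/-- A profile/strategy is valid if it always follows edges. -/
def Valid (G : QGame P V) (σ : Strat P V) : Prop := ∀ h v, G.E v (σ h v)

/-- History/current-vertex pair produced after `n` steps of `σ` from `v`. -/
def outcomeAux (σ : Strat P V) (v : V) : ℕ → List V × V
  | 0 => ([], v)
  | n + 1 =>
      let p := outcomeAux σ v n
      (p.1 ++ [p.2], σ p.1 p.2)

/-- The outcome play of profile `σ` from initial vertex `v`. -/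
def outcome (σ : Strat P V) (v : V) (n : ℕ) : V := (outcomeAux σ v n).2

/-- The profile where player `i` unilaterally deviates to strategy `τ`
from the profile `σ`. -/
def devProf (G : QGame P V) (σ τ : Strat P V) (i : P) : Strat P V :=
  fun h v => if G.owner v = i then τ h v else σ h v

/-- The set of deviation steps of `τ` from `σ` (for player `i`, from `v`):
positions `n` along the outcome of the deviated profile where the current
vertex belongs to player `i` and `τ` disagrees with `σ`. -/
def devSteps (G : QGame P V) (σ τ : Strat P V) (i : P) (v : V) : Set ℕ :=
  {n | G.owner (outcome (G.devProf σ τ i) v n) = i ∧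
       σ (outcomeAux (G.devProf σ τ i) v n).1 (outcome (G.devProf σ τ i) v n) ≠
       τ (outcomeAux (G.devProf σ τ i) v n).1 (outcome (G.devProf σ τ i) v n)}

/-- `τ` is finitely deviating from `σ`. -/
def FinDev (G : QGame P V) (σ τ : Strat P V) (i : P) (v : V) : Prop :=
  (G.devSteps σ τ i v).Finite

/-- `τ` is one-shot deviating from `σ`: its unique deviation step is at the
initial vertex. -/
def OneShotDev (G : QGame P V) (σ τ : Strat P V) (i : P) (v : V) : Prop :=
  G.devSteps σ τ i v = {0}

/-- Nash equilibrium of the profile `σ` from `v`, with respect to a cost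
assignment `c` (no player has a profitable unilateral deviation). -/
def IsNEwith (G : QGame P V) (c : P → (ℕ → V) → EReal) (σ : Strat P V) (v : V) : Prop :=
  ∀ i τ, G.Valid τ →
    c i (outcome σ v) ≤ c i (outcome (G.devProf σ τ i) v)

/-- Weak Nash equilibrium: no profitable finitely deviating strategy. -/
def IsWeakNEwith (G : QGame P V) (c : P → (ℕ → V) → EReal) (σ : Strat P V) (v : V) : Prop :=
  ∀ i τ, G.Valid τ → G.FinDev σ τ i v →
    c i (outcome σ v) ≤ c i (outcome (G.devProf σ τ i) v)

/-- Very weak Nash equilibrium: no profitable one-shot deviating strategy. -/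
def IsVeryWeakNEwith (G : QGame P V) (c : P → (ℕ → V) → EReal) (σ : Strat P V) (v : V) : Prop :=
  ∀ i τ, G.Valid τ → G.OneShotDev σ τ i v →
    c i (outcome σ v) ≤ c i (outcome (G.devProf σ τ i) v)

/-- The strategy profile induced by `σ` in the subgame after history `h`. -/
def subStrat (σ : Strat P V) (h : List V) : Strat P V := fun g v => σ (h ++ g) v

/-- The cost functions of the subgame after history `h`. -/
def subCost (G : QGame P V) (h : List V) : P → (ℕ → V) → EReal :=
  fun i ρ => G.cost i (prepend h ρ)

/-- Subgame perfect equilibrium: Nash equilibrium in every subgame. -/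
def IsSPE (G : QGame P V) (v0 : V) (σ : Strat P V) : Prop :=
  ∀ h v, G.IsHist v0 h v → G.IsNEwith (G.subCost h) (subStrat σ h) v

/-- Weak subgame perfect equilibrium: weak NE in every subgame. -/
def IsWeakSPE (G : QGame P V) (v0 : V) (σ : Strat P V) : Prop :=
  ∀ h v, G.IsHist v0 h v → G.IsWeakNEwith (G.subCost h) (subStrat σ h) v

/-- Very weak subgame perfect equilibrium: very weak NE in every subgame. -/
def IsVeryWeakSPE (G : QGame P V) (v0 : V) (σ : Strat P V) : Prop :=
  ∀ h v, G.IsHist v0 h v → G.IsVeryWeakNEwith (G.subCost h) (subStrat σ h) v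

/-- One elimination step: `ρ` (a potential outcome in the subgame after `h`)
is erased if some player `i` controlling a vertex `ρ n` along `hρ` has an
alternative edge to some `v' ≠ ρ (n+1)` such that every play `ρ'` in the
current potential set after the extended history gives `i` a strictly
smaller cost than `hρ`. -/
def Eset (G : QGame P V) (Pr : List V → V → Set (ℕ → V)) (h : List V) :
    Set (ℕ → V) :=
  {ρ | ∃ n v', G.E (ρ n) v' ∧ v' ≠ ρ (n + 1) ∧
      ∀ ρ' ∈ Pr (h ++ playPrefix ρ (n + 1)) v',
        G.cost (G.owner (ρ n)) (prepend (h ++ playPrefix ρ (n + 1)) ρ') <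
          G.cost (G.owner (ρ n)) (prepend h ρ)}

/-- The transfinite sequence `P_α(hv)` of sets of potential outcomes of weak
Nash equilibria in the subgame `(G|_h, v)`: all plays at stage `0`, removal
of `E_α` at successors, intersections at limits. -/
def Pset (G : QGame P V) (α : Ordinal) : List V → V → Set (ℕ → V) :=
  Ordinal.limitRecOn (motive := fun _ => List V → V → Set (ℕ → V)) α
    (fun _h v => {ρ | G.IsPlay ρ ∧ ρ 0 = v})
    (fun _ Pr => fun h v => Pr h v \ G.Eset Pr h)
    (fun α _ Pr => fun h v => ⋂ (β : Ordinal) (hβ : β < α), Pr β hβ h v)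

/-- A sequence of plays converges to `ρ` (in the product topology on `V^ω`
with `V` discrete) iff every finite prefix of `ρ` is eventually a prefix of
the members of the sequence. -/
def Converges (ρs : ℕ → ℕ → V) (ρ : ℕ → V) : Prop :=
  ∀ m, ∃ N, ∀ n ≥ N, ∀ k ≤ m, ρs n k = ρ k

/-- Upper semicontinuity of a cost function on plays. -/
def USCcost (G : QGame P V) (c : (ℕ → V) → EReal) : Prop :=
  ∀ (ρs : ℕ → ℕ → V) (ρ : ℕ → V), (∀ n, G.IsPlay (ρs n)) → G.IsPlay ρ →
    Converges ρs ρ →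
      Filter.limsup (fun n => c (ρs n)) Filter.atTop ≤ c ρ

/-- A strategy (profile) is finite-memory if it is computed by a Moore
machine: a finite set `M` of memory states, updated while reading the
history, determines the move. -/
def FinMem (σ : Strat P V) : Prop :=
  ∃ (M : Type) (_ : Finite M) (m0 : M) (upd : M → V → M) (act : M → V → V),
    ∀ h v, σ h v = act (h.foldl upd m0) v

/-- Quantitative reachability cost: the least index at which `ρ` visits the
target set `T`, and `+∞` if `T` is never visited. -/
def reachCost (T : Set V) (ρ : ℕ → V) : EReal :=
  if h : ∃ n, ρ n ∈ T then ((Nat.find h : ℕ) : EReal) else ⊤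

/-- `G` is a quantitative reachability game with target sets `T i`. -/
def IsReachGame (G : QGame P V) (T : P → Set V) : Prop :=
  ∀ i ρ, G.cost i ρ = reachCost (T i) ρ

/-- The set of players that have not visited their target set along the
history `h`. -/
def Iset (T : P → Set V) (h : List V) : Set P := {i | ∀ u ∈ h, u ∉ T i}

end QGame

open QGame

/-- The two-player game of Figure 3: vertices `0 = v₀` (player `0`),
`1 = v₁` (player `1`), `2 = v₂`, `3 = v₃`; edges `v₀→v₁`, `v₀→v₂`,
`v₁→v₀`, `v₁→v₃`, `v₂→v₂`, `v₃→v₃`; a play ending in `v₂^ω` costs `(1,2)`,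
a play ending in `v₃^ω` costs `(0,1)`, and the play `(v₀v₁)^ω` costs
`(2,0)`. -/
noncomputable def exGame : QGame (Fin 2) (Fin 4) where
  owner := fun v => if v = 1 then 1 else 0
  E := fun a b =>
    (a = 0 ∧ (b = 1 ∨ b = 2)) ∨ (a = 1 ∧ (b = 0 ∨ b = 3)) ∨
    (a = 2 ∧ b = 2) ∨ (a = 3 ∧ b = 3)
  succ_exists := by decide
  cost := fun i ρ =>
    if ∃ N, ∀ n ≥ N, ρ n = 2 then (if i = 0 then 1 else 2)
    else if ∃ N, ∀ n ≥ N, ρ n = 3 then (if i = 0 then 0 else 1)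
    else (if i = 0 then 2 else 0)

/-!
Costs in `exGame` depend only on where a play ends, so they are prefix-independent, and every
play leaving `{v₀, v₁}` is absorbed in `v₂` or `v₃`.

The stationary profile `v₀ ↦ v₁ ↦ v₃` is a weak SPE: player `0` already pays its minimum `0`,
and a finitely deviating player `1` eventually reverts to `v₁ ↦ v₃`, so the play is absorbed
and costs it at least `1`.

In an SPE, one-shot deviations show in turn: from `v₀` player `0` pays at most `1` (by moving
to `v₂`), so the outcome is never `(v₀v₁)^ω`; from `v₁` player `1` pays at most `1` (by moving
to `v₃`), so the outcome ends in `v₃`; hence player `0` always moves `v₀ ↦ v₁`. But then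
player `1`, always moving back to `v₀`, forces `(v₀v₁)^ω` and pays `0` instead of `1`.
-/

namespace QGame

variable {P V : Type} {G : QGame P V} {σ τ : Strat P V}

lemma outcome_succ (σ : Strat P V) (v : V) (n : ℕ) :
    outcome σ v (n + 1) = σ (outcomeAux σ v n).1 (outcome σ v n) := rfl

lemma outcomeAux_succ_fst (σ : Strat P V) (v : V) (n : ℕ) :
    (outcomeAux σ v (n + 1)).1 = (outcomeAux σ v n).1 ++ [outcome σ v n] := rfl

lemma outcome_isPlay (hσ : G.Valid σ) (v : V) : G.IsPlay (outcome σ v) :=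
  fun _ => hσ _ _

lemma subStrat_valid (hσ : G.Valid σ) (h : List V) : G.Valid (subStrat σ h) :=
  fun g v => hσ (h ++ g) v

lemma devProf_valid (hσ : G.Valid σ) (hτ : G.Valid τ) (i : P) :
    G.Valid (G.devProf σ τ i) := by
  intro h v
  unfold devProf
  split_ifs
  exacts [hτ h v, hσ h v]

lemma subStrat_subStrat (σ : Strat P V) (h g : List V) :
    subStrat (subStrat σ h) g = subStrat σ (h ++ g) := by
  funext l v
  simp [subStrat]

lemma outcomeAux_succ (σ : Strat P V) (v : V) (k : ℕ) :
    outcomeAux σ v (k + 1) =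
      (v :: (outcomeAux (subStrat σ [v]) (σ [] v) k).1,
        (outcomeAux (subStrat σ [v]) (σ [] v) k).2) := by
  induction k with
  | zero => rfl
  | succ k ih =>
    rw [outcomeAux, ih]
    simp [outcomeAux, subStrat]

lemma outcome_eq_prepend (σ : Strat P V) (v : V) :
    outcome σ v = prepend [v] (outcome (subStrat σ [v]) (σ [] v)) := by
  funext n
  cases n with
  | zero => rfl
  | succ k => simp [outcome, outcomeAux_succ, prepend]

lemma IsHist.append_singleton {v0 v w : V} {h : List V} (hh : G.IsHist v0 h v)
    (hE : G.E v w) : G.IsHist v0 (h ++ [v]) w := by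
  refine ⟨by simpa using hh.1, List.IsChain.append hh.2 (List.isChain_singleton w) ?_⟩
  simpa using hE

lemma IsHist.outcome (hσ : G.Valid σ) {v0 v : V} {h : List V} (hh : G.IsHist v0 h v) :
    ∀ n, G.IsHist v0 (h ++ (outcomeAux σ v n).1) (outcome σ v n)
  | 0 => by simpa [outcomeAux, QGame.outcome] using hh
  | n + 1 => by
    rw [outcomeAux_succ_fst, ← List.append_assoc]
    exact (hh.outcome hσ n).append_singleton (hσ _ _)

def stationary (f : V → V) : Strat P V := fun _ v => f v

lemma stationary_valid {f : V → V} (hf : ∀ v, G.E v (f v)) : G.Valid (stationary f) :=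
  fun _ v => hf v

lemma subStrat_stationary (f : V → V) (h : List V) :
    subStrat (stationary f : Strat P V) h = stationary f := rfl

lemma outcome_stationary (f : V → V) (v : V) (n : ℕ) :
    outcome (stationary f : Strat P V) v n = f^[n] v := by
  induction n with
  | zero => rfl
  | succ n ih => rw [outcome_succ, Function.iterate_succ_apply', ← ih]; rfl

def oneShot (σ : Strat P V) (v w : V) : Strat P V :=
  fun g u => if g = [] ∧ u = v then w else σ g u

lemma oneShot_valid (hσ : G.Valid σ) {v w : V} (hw : G.E v w) : G.Valid (oneShot σ v w) := by
  intro g u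
  unfold oneShot
  split_ifs with h
  · exact h.2 ▸ hw
  · exact hσ g u

lemma outcome_devProf_oneShot {v w : V} {i : P} (hv : G.owner v = i) :
    outcome (G.devProf σ (oneShot σ v w) i) v = prepend [v] (outcome (subStrat σ [v]) w) := by
  rw [outcome_eq_prepend]
  congr 2
  · funext g u
    simp [subStrat, devProf, oneShot]
  · simp [devProf, oneShot, hv]

lemma devProf_apply_of_owner_eq {i : P} {v : V} (hv : G.owner v = i) (h : List V) :
    G.devProf σ τ i h v = τ h v :=
  if_pos hv

lemma devProf_apply_of_owner_ne {i : P} {v : V} (hv : G.owner v ≠ i) (h : List V) :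
    G.devProf σ τ i h v = σ h v :=
  if_neg hv

lemma outcome_devProf_succ_of_not_mem_devSteps {i : P} {v : V} {n : ℕ}
    (hn : n ∉ G.devSteps σ τ i v) :
    outcome (G.devProf σ τ i) v (n + 1) =
      σ (outcomeAux (G.devProf σ τ i) v n).1 (outcome (G.devProf σ τ i) v n) := by
  simp only [devSteps, Set.mem_ofPred_eq, not_and, not_not] at hn
  rw [outcome_succ]
  by_cases hi : G.owner (outcome (G.devProf σ τ i) v n) = i
  · exact (devProf_apply_of_owner_eq hi _).trans (hn hi).symm
  · exact devProf_apply_of_owner_ne hi _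

def PrefixIndependent (G : QGame P V) : Prop :=
  ∀ i h ρ, G.cost i (prepend h ρ) = G.cost i ρ

lemma PrefixIndependent.subCost_eq (hG : G.PrefixIndependent) (h : List V) :
    G.subCost h = G.cost :=
  funext₂ fun i ρ => hG i h ρ

lemma PrefixIndependent.cost_outcome_subStrat (hG : G.PrefixIndependent) (σ : Strat P V)
    (h : List V) (v : V) (i : P) :
    G.cost i (outcome (subStrat σ h) v) = G.cost i (outcome (subStrat σ (h ++ [v])) (σ h v)) := by
  rw [outcome_eq_prepend, hG, subStrat_subStrat]
  simp [subStrat]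

lemma IsSPE.cost_le (hG : G.PrefixIndependent) {v0 v : V} {h : List V} (hσ : G.IsSPE v0 σ)
    (hh : G.IsHist v0 h v) (i : P) (hτ : G.Valid τ) :
    G.cost i (outcome (subStrat σ h) v) ≤ G.cost i (outcome (G.devProf (subStrat σ h) τ i) v) := by
  simpa only [hG.subCost_eq] using hσ h v hh i τ hτ

lemma IsSPE.cost_le_oneShot (hG : G.PrefixIndependent) (hσv : G.Valid σ) {v0 v w : V}
    {h : List V} (hσ : G.IsSPE v0 σ) (hh : G.IsHist v0 h v) (hw : G.E v w) :
    G.cost (G.owner v) (outcome (subStrat σ h) v) ≤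
      G.cost (G.owner v) (outcome (subStrat σ (h ++ [v])) w) := by
  have := hσ.cost_le hG hh (G.owner v) (oneShot_valid (subStrat_valid hσv h) hw)
  rwa [outcome_devProf_oneShot rfl, hG, subStrat_subStrat] at this

lemma isWeakSPE_of_subStrat_eq (hG : G.PrefixIndependent) (hσ : ∀ h, subStrat σ h = σ)
    (hne : ∀ v, G.IsWeakNEwith G.cost σ v) (v0 : V) : G.IsWeakSPE v0 σ := by
  intro h v _
  rw [hσ, hG.subCost_eq]
  exact hne v

lemma exists_forall_ge_prepend_eq_iff (h : List V) (ρ : ℕ → V) (c : V) :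
    (∃ N, ∀ n ≥ N, prepend h ρ n = c) ↔ ∃ N, ∀ n ≥ N, ρ n = c := by
  constructor
  · rintro ⟨N, hN⟩
    refine ⟨N, fun n hn => ?_⟩
    simpa [prepend] using hN (n + h.length) (by omega)
  · rintro ⟨N, hN⟩
    refine ⟨N + h.length, fun n hn => ?_⟩
    rw [prepend, dif_neg (by omega)]
    exact hN _ (by omega)

end QGame

open QGame

lemma exGame_E_iff (a b : Fin 4) :
    exGame.E a b ↔ (a = 0 ∧ (b = 1 ∨ b = 2)) ∨ (a = 1 ∧ (b = 0 ∨ b = 3)) ∨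
      (a = 2 ∧ b = 2) ∨ (a = 3 ∧ b = 3) := Iff.rfl

lemma exGame_owner_zero : exGame.owner 0 = 0 := rfl

lemma exGame_owner_one : exGame.owner 1 = 1 := rfl

lemma exGame_E_zero {w : Fin 4} (hw : exGame.E 0 w) : w = 1 ∨ w = 2 := by
  revert w; simp only [exGame_E_iff]; decide

lemma exGame_E_one {w : Fin 4} (hw : exGame.E 1 w) : w = 0 ∨ w = 3 := by
  revert w; simp only [exGame_E_iff]; decide

lemma exGame_E_absorbing {c w : Fin 4} (hc : c = 2 ∨ c = 3) (hw : exGame.E c w) : w = c := by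
  revert c w; simp only [exGame_E_iff]; decide

lemma exGame_prefixIndependent : exGame.PrefixIndependent := by
  intro i h ρ
  simp only [exGame, exists_forall_ge_prepend_eq_iff]

lemma exGame_cost_cases (ρ : ℕ → Fin 4) :
    (exGame.cost 0 ρ = 1 ∧ exGame.cost 1 ρ = 2) ∨ (exGame.cost 0 ρ = 0 ∧ exGame.cost 1 ρ = 1) ∨
      (exGame.cost 0 ρ = 2 ∧ exGame.cost 1 ρ = 0) := by
  simp only [exGame]
  split_ifs <;> simp_all

lemma exGame_play_eq_of_absorbing {ρ : ℕ → Fin 4} (hρ : exGame.IsPlay ρ) {c : Fin 4}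
    (hc : c = 2 ∨ c = 3) {n : ℕ} (hn : ρ n = c) : ∀ m ≥ n, ρ m = c := by
  intro m hm
  induction m, hm using Nat.le_induction with
  | base => exact hn
  | succ m _ ih => exact exGame_E_absorbing hc (ih ▸ hρ m)

lemma exGame_cost_of_visit_two {ρ : ℕ → Fin 4} (hρ : exGame.IsPlay ρ) {n : ℕ} (hn : ρ n = 2)
    (i : Fin 2) : exGame.cost i ρ = if i = 0 then 1 else 2 :=
  if_pos ⟨n, exGame_play_eq_of_absorbing hρ (Or.inl rfl) hn⟩

lemma exGame_cost_of_visit_three {ρ : ℕ → Fin 4} (hρ : exGame.IsPlay ρ) {n : ℕ} (hn : ρ n = 3)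
    (i : Fin 2) : exGame.cost i ρ = if i = 0 then 0 else 1 := by
  have h3 := exGame_play_eq_of_absorbing hρ (Or.inr rfl) hn
  refine (if_neg ?_).trans (if_pos ⟨n, h3⟩)
  rintro ⟨N, h2⟩
  have := (h2 (max N n) (le_max_left _ _)).symm.trans (h3 (max N n) (le_max_right _ _))
  exact absurd this (by decide)

lemma exGame_cost_of_forall_eq_zero_or_one {ρ : ℕ → Fin 4} (hρ : ∀ n, ρ n = 0 ∨ ρ n = 1) (i : Fin 2) :
    exGame.cost i ρ = if i = 0 then 2 else 0 := by
  have never (c : Fin 4) (hc : c = 2 ∨ c = 3) : ¬ ∃ N, ∀ n ≥ N, ρ n = c := by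
    rintro ⟨N, hN⟩
    rcases hρ N with h | h <;> rcases hc with rfl | rfl <;> simp [hN N le_rfl] at h
  exact (if_neg (never 2 (Or.inl rfl))).trans (if_neg (never 3 (Or.inr rfl)))

def exWeakSPE : Strat (Fin 2) (Fin 4) := stationary ![1, 3, 2, 3]

lemma exWeakSPE_valid : exGame.Valid exWeakSPE :=
  stationary_valid (by simp only [exGame_E_iff]; decide)

def exLoop : Strat (Fin 2) (Fin 4) := stationary ![1, 0, 2, 3]

lemma exLoop_valid : exGame.Valid exLoop :=
  stationary_valid (by simp only [exGame_E_iff]; decide)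

/-- Once the finitely many deviations are over, two moves of `exWeakSPE` reach `v₂` or `v₃`. -/
lemma exists_outcome_devProf_exWeakSPE_absorbing {τ : Strat (Fin 2) (Fin 4)} {i : Fin 2}
    {v : Fin 4} (hfin : exGame.FinDev exWeakSPE τ i v) :
    ∃ n, outcome (exGame.devProf exWeakSPE τ i) v n = 2 ∨
      outcome (exGame.devProf exWeakSPE τ i) v n = 3 := by
  obtain ⟨N, hN⟩ := hfin.bddAbove
  have follows (n : ℕ) (hn : N < n) :
      outcome (exGame.devProf exWeakSPE τ i) v (n + 1) =
        ![1, 3, 2, 3] (outcome (exGame.devProf exWeakSPE τ i) v n) :=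
    outcome_devProf_succ_of_not_mem_devSteps fun hmem => absurd (hN hmem) (by omega)
  refine ⟨N + 3, ?_⟩
  rw [follows (N + 2) (by omega), follows (N + 1) (by omega)]
  generalize outcome (exGame.devProf exWeakSPE τ i) v (N + 1) = x
  revert x
  decide

lemma exGame_isWeakNE_exWeakSPE (v : Fin 4) : exGame.IsWeakNEwith exGame.cost exWeakSPE v := by
  intro i τ hτ hfin
  have hπ := devProf_valid exWeakSPE_valid hτ i
  by_cases hv : v = 2
  · subst hv
    rw [exGame_cost_of_visit_two (outcome_isPlay exWeakSPE_valid 2) (n := 0) rfl,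
      exGame_cost_of_visit_two (outcome_isPlay hπ 2) (n := 0) rfl]
  have h3 : outcome exWeakSPE v 2 = 3 := by
    rw [exWeakSPE, outcome_stationary]
    exact (by decide : ∀ x : Fin 4, x ≠ 2 → (![1, 3, 2, 3] : Fin 4 → Fin 4)^[2] x = 3) v hv
  rw [exGame_cost_of_visit_three (outcome_isPlay exWeakSPE_valid v) h3]
  obtain ⟨n, hn | hn⟩ := exists_outcome_devProf_exWeakSPE_absorbing hfin
  · rw [exGame_cost_of_visit_two (outcome_isPlay hπ v) hn]
    split_ifs <;> norm_cast
  · rw [exGame_cost_of_visit_three (outcome_isPlay hπ v) hn]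

lemma exGame_isWeakSPE_exWeakSPE : exGame.IsWeakSPE 0 exWeakSPE :=
  isWeakSPE_of_subStrat_eq exGame_prefixIndependent (subStrat_stationary _)
    exGame_isWeakNE_exWeakSPE 0

section NoSPE

variable {σ : Strat (Fin 2) (Fin 4)} {h : List (Fin 4)}

lemma cost_zero_le_one_of_isHist_zero (hσv : exGame.Valid σ) (hσ : exGame.IsSPE 0 σ)
    (hh : exGame.IsHist 0 h 0) : exGame.cost 0 (outcome (subStrat σ h) 0) ≤ 1 :=
  calc exGame.cost 0 (outcome (subStrat σ h) 0)
      ≤ exGame.cost 0 (outcome (subStrat σ (h ++ [0])) 2) :=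
        hσ.cost_le_oneShot exGame_prefixIndependent hσv hh (by simp [exGame_E_iff])
    _ = 1 := exGame_cost_of_visit_two (outcome_isPlay (subStrat_valid hσv _) 2) (n := 0) rfl 0

lemma cost_zero_eq_zero_of_isHist_one (hσv : exGame.Valid σ) (hσ : exGame.IsSPE 0 σ)
    (hh : exGame.IsHist 0 h 1) : exGame.cost 0 (outcome (subStrat σ h) 1) = 0 := by
  have hplay (w : Fin 4) := outcome_isPlay (subStrat_valid hσv (h ++ [1])) w
  have hc1 : exGame.cost 1 (outcome (subStrat σ h) 1) ≤ 1 :=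
    calc exGame.cost 1 (outcome (subStrat σ h) 1)
        ≤ exGame.cost 1 (outcome (subStrat σ (h ++ [1])) 3) :=
          hσ.cost_le_oneShot exGame_prefixIndependent hσv hh (by simp [exGame_E_iff])
      _ = 1 := exGame_cost_of_visit_three (hplay 3) (n := 0) rfl 1
  have hc0 : exGame.cost 0 (outcome (subStrat σ h) 1) ≤ 1 := by
    rw [exGame_prefixIndependent.cost_outcome_subStrat]
    rcases exGame_E_one (hσv h 1) with hw | hw
    · exact hw ▸ cost_zero_le_one_of_isHist_zero hσv hσ (hh.append_singleton (hw ▸ hσv h 1))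
    · rw [hw, exGame_cost_of_visit_three (hplay 3) (n := 0) rfl]
      norm_cast
  rcases exGame_cost_cases (outcome (subStrat σ h) 1) with ⟨h0, h1⟩ | ⟨h0, -⟩ | ⟨h0, -⟩
  · rw [h1] at hc1; norm_cast at hc1
  · exact h0
  · rw [h0] at hc0; norm_cast at hc0

lemma move_eq_one_of_isHist_zero (hσv : exGame.Valid σ) (hσ : exGame.IsSPE 0 σ)
    (hh : exGame.IsHist 0 h 0) : σ h 0 = 1 := by
  refine (exGame_E_zero (hσv h 0)).resolve_right fun h2 => ?_
  have hdev := hσ.cost_le_oneShot exGame_prefixIndependent hσv hh (w := 1) (by simp [exGame_E_iff])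
  rw [exGame_owner_zero, exGame_prefixIndependent.cost_outcome_subStrat, h2,
    exGame_cost_of_visit_two (outcome_isPlay (subStrat_valid hσv _) 2) (n := 0) rfl,
    cost_zero_eq_zero_of_isHist_one hσv hσ (hh.append_singleton (by simp [exGame_E_iff]))] at hdev
  norm_cast at hdev

lemma not_isSPE_of_valid (hσv : exGame.Valid σ) : ¬ exGame.IsSPE 0 σ := by
  intro hσ
  have hh : exGame.IsHist 0 [0] 1 :=
    (show exGame.IsHist 0 [] 0 from ⟨rfl, List.isChain_singleton 0⟩).append_singleton
      (by simp [exGame_E_iff])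
  have hπ := devProf_valid (subStrat_valid hσv [0]) exLoop_valid 1
  have hloop (n : ℕ) : outcome (exGame.devProf (subStrat σ [0]) exLoop 1) 1 n = 0 ∨
      outcome (exGame.devProf (subStrat σ [0]) exLoop 1) 1 n = 1 := by
    induction n with
    | zero => exact Or.inr rfl
    | succ n ih =>
      rw [outcome_succ]
      rcases ih with h0 | h1
      · have hhn := hh.outcome hπ n
        rw [h0] at hhn
        rw [h0, devProf_apply_of_owner_ne (by simp [exGame_owner_zero])]
        exact Or.inr (move_eq_one_of_isHist_zero (σ := σ) hσv hσ hhn)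
      · rw [h1, devProf_apply_of_owner_eq exGame_owner_one]
        exact Or.inl rfl
  have hle := hσ.cost_le exGame_prefixIndependent hh 1 exLoop_valid
  rw [exGame_cost_of_forall_eq_zero_or_one hloop] at hle
  have h0 := cost_zero_eq_zero_of_isHist_one hσv hσ hh
  rcases exGame_cost_cases (outcome (subStrat σ [0]) 1) with ⟨-, h1⟩ | ⟨-, h1⟩ | ⟨h2, -⟩
  · rw [h1] at hle; norm_cast at hle
  · rw [h1] at hle; norm_cast at hle
  · rw [h2] at h0; norm_cast at h0

end NoSPE

/-- The game `exGame` initialized at `v₀` admits a weak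
subgame perfect equilibrium but no subgame perfect equilibrium.  In
particular, there exists a two-player quantitative game on a finite graph
with a weak SPE but no SPE. -/
theorem exGame_has_weakSPE_but_no_SPE :
    (∃ σ : Strat (Fin 2) (Fin 4), exGame.Valid σ ∧ exGame.IsWeakSPE 0 σ) ∧
    ¬ ∃ σ : Strat (Fin 2) (Fin 4), exGame.Valid σ ∧ exGame.IsSPE 0 σ :=
  ⟨⟨exWeakSPE, exWeakSPE_valid, exGame_isWeakSPE_exWeakSPE⟩,
    fun ⟨_, hσv, hσ⟩ => not_isSPE_of_valid hσv hσ⟩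
end
end

section
/- Suffix closure of potential outcomes: if a play ρ belongs to P_α(hv) and ρ = h_1 ρ_1 is any decomposition of ρ into a finite prefix h_1 and infinite suffix ρ_1 with first vertex v_1, then ρ_1 belongs to P_α(h h_1 v_1). -/
open Classical

noncomputable section

/-! Induction on `α`. The only real point is the successor step: a witness that the suffix
`ρ₁` is eliminated after the history `h h₁` (a deviation at position `m` of `ρ₁`) is a
witness that `ρ` is eliminated after `h`, deviating at position `|h₁| + m`, because the
extended histories and the concatenations `h h₁ ρ₁ = h ρ` coincide. -/

namespace QGame

variable {P V : Type}

lemma Pset_zero (G : QGame P V) :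
    G.Pset 0 = fun _ v => {ρ | G.IsPlay ρ ∧ ρ 0 = v} :=
  Ordinal.limitRecOn_zero _ _ _

lemma Pset_succ (G : QGame P V) (α : Ordinal) :
    G.Pset (α + 1) = fun h v => G.Pset α h v \ G.Eset (G.Pset α) h :=
  Ordinal.limitRecOn_add_one _ _ _ _

lemma Pset_limit (G : QGame P V) {α : Ordinal} (hα : Order.IsSuccLimit α) :
    G.Pset α = fun h v => ⋂ (β : Ordinal) (_ : β < α), G.Pset β h v :=
  Ordinal.limitRecOn_limit _ _ _ _ hα

lemma playPrefix_add (ρ : ℕ → V) (n m : ℕ) :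
    playPrefix ρ (n + m) = playPrefix ρ n ++ playPrefix (fun k => ρ (k + n)) m := by
  simp only [playPrefix, List.ofFn_add]
  congr 2 with k
  simp [Nat.add_comm]

lemma prepend_append (g h : List V) (ρ : ℕ → V) :
    prepend (g ++ h) ρ = prepend g (prepend h ρ) := by
  funext k
  simp only [prepend, List.length_append, List.get_eq_getElem]
  by_cases hg : k < g.length
  · simp [hg, List.getElem_append_left hg, show k < g.length + h.length by omega]
  · simp only [hg, dite_false, List.getElem_append_right (Nat.le_of_not_lt hg)]
    by_cases hh : k - g.length < h.length
    · simp [hh, show k < g.length + h.length by omega]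
    · simp [hh, show ¬ k < g.length + h.length by omega, Nat.sub_sub]

lemma prepend_playPrefix (ρ : ℕ → V) (n : ℕ) :
    prepend (playPrefix ρ n) (fun k => ρ (k + n)) = ρ := by
  funext k
  by_cases hk : k < n
  · simp [prepend, playPrefix, hk]
  · simp [prepend, playPrefix, hk, Nat.sub_add_cancel (Nat.le_of_not_lt hk)]

lemma IsPlay.shift {G : QGame P V} {ρ : ℕ → V} (hρ : G.IsPlay ρ) (n : ℕ) :
    G.IsPlay (fun k => ρ (k + n)) := fun k => by
  simpa only [Nat.add_right_comm k n 1] using hρ (k + n)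

lemma mem_Eset_of_shift_mem_Eset (G : QGame P V) (Pr : List V → V → Set (ℕ → V))
    {h : List V} {ρ : ℕ → V} {n : ℕ}
    (hE : (fun k => ρ (k + n)) ∈ G.Eset Pr (h ++ playPrefix ρ n)) : ρ ∈ G.Eset Pr h := by
  obtain ⟨m, v', hedge, hne, hcost⟩ := hE
  have hhist : h ++ playPrefix ρ n ++ playPrefix (fun k => ρ (k + n)) (m + 1) =
      h ++ playPrefix ρ (n + m + 1) := by
    rw [List.append_assoc, ← playPrefix_add, Nat.add_assoc]
  refine ⟨n + m, v', ?_, ?_, fun ρ' hρ' => ?_⟩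
  · simpa only [Nat.add_comm m n] using hedge
  · simpa only [show m + 1 + n = n + m + 1 by omega] using hne
  · have := hcost ρ' (hhist ▸ hρ')
    rw [hhist, prepend_append h (playPrefix ρ n), prepend_playPrefix] at this
    simpa only [Nat.add_comm m n] using this

end QGame

open QGame in
theorem Pset_suffix_closed_general {P V : Type}
    (G : QGame P V) (α : Ordinal) (h : List V) (v : V) :
    ∀ ρ ∈ G.Pset α h v, ∀ n : ℕ,
      (fun k => ρ (k + n)) ∈ G.Pset α (h ++ playPrefix ρ n) (ρ n) := by
  induction α using Ordinal.limitRecOn generalizing h v with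
  | zero =>
    rw [Pset_zero]
    rintro ρ ⟨hplay, -⟩ n
    exact ⟨hplay.shift n, by simp⟩
  | add_one α ih =>
    intro ρ hρ n
    rw [Pset_succ] at hρ ⊢
    exact ⟨ih h v ρ hρ.1 n, fun hE => hρ.2 (G.mem_Eset_of_shift_mem_Eset _ hE)⟩
  | limit α hα ih =>
    intro ρ hρ n
    rw [Pset_limit G hα] at hρ ⊢
    simp only [Set.mem_iInter] at hρ ⊢
    exact fun β hβ => ih β hβ h v ρ (hρ β hβ) n

open QGame in
/-- Suffix closure of the potential-outcome sets: if
`ρ ∈ P_α(hv)` and `ρ = h₁ρ₁` is any decomposition of `ρ` into the finite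
prefix `h₁` of length `n` and the infinite suffix `ρ₁` starting at
`v₁ = ρ n`, then `ρ₁ ∈ P_α(h h₁ v₁)`. -/
theorem Pset_suffix_closed {P V : Type} [Finite P] [Finite V]
    (G : QGame P V) (α : Ordinal) (h : List V) (v : V) :
    ∀ ρ ∈ G.Pset α h v, ∀ n : ℕ,
      (fun k => ρ (k + n)) ∈ G.Pset α (h ++ playPrefix ρ n) (ρ n) :=
  Pset_suffix_closed_general G α h v
end
end
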